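/- Let C be a locally presentable category. Then the trivial model structure on C — in which the weak equivalences are exactly the isomorphisms, every morphism is a fibration, and every morphism is a cofibration — is cofibrantly generated: choosing a regular cardinal κ with C κ-presentable and S a set of representatives of isomorphism classes of κ-compact objects, the sets I = { A → B : A, B ∈ S } (all morphisms between objects of S) and J = { id_A : A ∈ S } are generating sets of cofibrations and trivial cofibrations respectively. -/

import Mathlib

/-!
STATEMENT 4: For a locally presentable category `C`, the trivial model structure
(weak equivalences = isomorphisms, all maps fibrations and cofibrations) is cofibrantly
generated: choosing a regular cardinal `κ` such that `C` is `κ`-presentable and a set `S`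
of representatives of isomorphism classes of `κ`-compact objects, the set
`I = {A ⟶ B : A, B ∈ S}` of all morphisms between objects of `S` generates the
cofibrations (i.e. the trivial fibrations — here, the isomorphisms — are exactly the
maps with the right lifting property against `I`) and `J = {id_A : A ∈ S}` generates the
trivial cofibrations (i.e. the fibrations — here, all maps — are exactly the maps with
the right lifting property against `J`).

Since Mathlib does not yet have locally presentable categories, we define
`κ`-filteredness, `κ`-compactness and `κ`-presentability of `C` here.
-/

open CategoryTheory Limits Opposite

universe v u

variable {C : Type u} [Category.{v} C]

/-- A small category `J` is `κ`-filtered if every diagram in `J` of size `< κ`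
admits a cocone. -/
def IsCardinalFilteredCat (κ : Cardinal.{v}) (J : Type v) [SmallCategory J] : Prop :=
  ∀ (K : Type v) (_ : SmallCategory K), Cardinal.mk (Arrow K) < κ →
    ∀ G : K ⥤ J, Nonempty (Cocone G)

/-- An object `A` of `C` is `κ`-compact (`κ`-presentable) if `Hom(A, -)` preserves
colimits of `κ`-filtered diagrams. -/
def IsKappaCompact (κ : Cardinal.{v}) (A : C) : Prop :=
  ∀ (J : Type v) (_ : SmallCategory J), IsCardinalFilteredCat κ J →
    ∀ (F : J ⥤ C) (c : Cocone F), Nonempty (IsColimit c) →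
      Nonempty (IsColimit ((coyoneda.obj (op A)).mapCocone c))

/-- `C` is `κ`-presentable: it is cocomplete and every object is a colimit of a
`κ`-filtered diagram of `κ`-compact objects. -/
def IsKappaPresentable (κ : Cardinal.{v}) (C : Type u) [Category.{v} C] : Prop :=
  HasColimits C ∧
    ∀ X : C, ∃ (J : Type v) (_ : SmallCategory J), IsCardinalFilteredCat κ J ∧
      ∃ (F : J ⥤ C) (c : Cocone F), (∀ j : J, IsKappaCompact κ (F.obj j)) ∧
        c.pt = X ∧ Nonempty (IsColimit c)

/-!
A map `f` with the right lifting property against `I` is bijective on `Hom(A, -)` for every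
`κ`-compact `A`: lifting against `⊥ ⟶ A` gives surjectivity and lifting against the codiagonal
`A ⨿ A ⟶ A` gives injectivity; both maps lie in `I` up to isomorphism because `κ`-compact
objects are closed under finite colimits. Writing `Y` as a colimit of `κ`-compact objects, the
lifts of the colimit injections assemble into a section `g` of `f`; writing `X` as such a
colimit, injectivity gives `f ≫ g = 𝟙 X`.
-/

lemma isCardinalFilteredCat_iff_isCardinalFiltered (κ : Cardinal.{v}) [Fact κ.IsRegular]
    (J : Type v) [SmallCategory J] : IsCardinalFilteredCat κ J ↔ IsCardinalFiltered J κ :=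
  ⟨fun h ↦ ⟨fun F hA ↦ h _ _ ((hasCardinalLT_iff_cardinal_mk_lt _ _).1 hA) F⟩,
    fun h _ _ hK F ↦ h.nonempty_cocone F ((hasCardinalLT_iff_cardinal_mk_lt _ _).2 hK)⟩

lemma isKappaCompact_iff_isCardinalPresentable (κ : Cardinal.{v}) [Fact κ.IsRegular] (A : C) :
    IsKappaCompact κ A ↔ IsCardinalPresentable A κ := by
  constructor
  · intro h
    exact ⟨fun J _ hJ ↦ ⟨fun {F} ↦ ⟨fun {c} hc ↦
      h J _ ((isCardinalFilteredCat_iff_isCardinalFiltered κ J).2 hJ) F c ⟨hc⟩⟩⟩⟩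
  · intro h J _ hJ F c ⟨hc⟩
    have := (isCardinalFilteredCat_iff_isCardinalFiltered κ J).1 hJ
    exact (preservesColimitsOfShape_of_isCardinalPresentable A κ J).preservesColimit.preserves hc

lemma isKappaCompact_initial (κ : Cardinal.{v}) [Fact κ.IsRegular] [HasInitial C] :
    IsKappaCompact κ (⊥_ C) := by
  rw [isKappaCompact_iff_isCardinalPresentable]
  have (k : Discrete PEmpty.{1}) : IsCardinalPresentable ((Functor.empty C).obj k) κ := k.as.elim
  exact isCardinalPresentable_of_isColimit _ (colimit.isColimit (Functor.empty C)) κ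
    (hasCardinalLT_of_finite _ _ (Fact.out : κ.IsRegular).aleph0_le)

lemma IsKappaCompact.coprod {κ : Cardinal.{v}} [Fact κ.IsRegular] [HasBinaryCoproducts C]
    {A B : C} (hA : IsKappaCompact κ A) (hB : IsKappaCompact κ B) :
    IsKappaCompact κ (A ⨿ B) := by
  rw [isKappaCompact_iff_isCardinalPresentable] at *
  have : ∀ k, IsCardinalPresentable ((pair A B).obj k) κ := by
    rintro ⟨_ | _⟩ <;> assumption
  exact isCardinalPresentable_of_isColimit _ (colimit.isColimit (pair A B)) κ
    (hasCardinalLT_of_finite _ _ (Fact.out : κ.IsRegular).aleph0_le)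

lemma surjective_comp_of_hasLiftingProperty_initial_to [HasInitial C] {A X Y : C} (f : X ⟶ Y)
    [HasLiftingProperty (initial.to A) f] : Function.Surjective fun u : A ⟶ X ↦ u ≫ f := by
  intro w
  have sq : CommSq (initial.to X) (initial.to A) f w := ⟨initial.hom_ext _ _⟩
  exact ⟨sq.lift, sq.fac_right⟩

lemma injective_comp_of_hasLiftingProperty_codiag {A X Y : C} [HasBinaryCoproduct A A]
    (f : X ⟶ Y) [HasLiftingProperty (codiag A) f] :
    Function.Injective fun u : A ⟶ X ↦ u ≫ f := by
  intro u v (huv : u ≫ f = v ≫ f)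
  have sq : CommSq (coprod.desc u v) (codiag A) f (u ≫ f) :=
    ⟨coprod.hom_ext (by simp only [coprod.inl_desc_assoc, Category.id_comp])
      (by simp only [coprod.inr_desc_assoc, Category.id_comp, huv])⟩
  have hl : codiag A ≫ sq.lift = coprod.desc u v := sq.fac_left
  have hu : sq.lift = u := by
    simpa only [coprod.inl_desc_assoc, coprod.inl_desc, Category.id_comp]
      using congrArg (coprod.inl ≫ ·) hl
  have hv : sq.lift = v := by
    simpa only [coprod.inr_desc_assoc, coprod.inr_desc, Category.id_comp]
      using congrArg (coprod.inr ≫ ·) hl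
  exact hu.symm.trans hv

section

variable {P : ObjectProperty C} {X Y : C} (f : X ⟶ Y)
  (hf : ∀ A, P A → Function.Bijective fun u : A ⟶ X ↦ u ≫ f)
include hf

lemma exists_comp_eq_id_of_bijective_comp {J : Type*} [Category* J]
    (hY : P.ColimitOfShape J Y) : ∃ g : Y ⟶ X, g ≫ f = 𝟙 Y := by
  choose u hu using fun j ↦ (hf _ (hY.prop_diag_obj j)).2 (hY.ι.app j)
  beta_reduce at hu
  have hnat {j j' : J} (φ : j ⟶ j') : hY.diag.map φ ≫ u j' = u j :=
    (hf _ (hY.prop_diag_obj j)).1 (by simp [hu])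
  let g := hY.isColimit.desc ⟨X, { app := u, naturality := fun _ _ φ ↦ by simp [hnat φ] }⟩
  have hg (j : J) : hY.ι.app j ≫ g = u j := hY.isColimit.fac _ j
  refine ⟨g, hY.isColimit.hom_ext fun j ↦ ?_⟩
  simp [reassoc_of% hg, hu]

lemma isIso_of_bijective_comp {J J' : Type*} [Category* J] [Category* J']
    (hX : P.ColimitOfShape J X) (hY : P.ColimitOfShape J' Y) : IsIso f := by
  obtain ⟨g, hgf⟩ := exists_comp_eq_id_of_bijective_comp f hf hY
  refine ⟨g, hX.isColimit.hom_ext fun i ↦ ?_, hgf⟩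
  exact (hf _ (hX.prop_diag_obj i)).1 (by simp [hgf])

end

lemma IsKappaPresentable.exists_colimitOfShape {κ : Cardinal.{v}}
    (hpres : IsKappaPresentable κ C) (X : C) : ∃ (J : Type v) (_ : SmallCategory J),
      Nonempty (ObjectProperty.ColimitOfShape (IsKappaCompact κ) J X) := by
  obtain ⟨J, _, -, F, c, hF, rfl, ⟨hc⟩⟩ := hpres.2 X
  exact ⟨J, _, ⟨{ diag := F, ι := c.ι, isColimit := hc, prop_diag_obj := hF }⟩⟩

section

variable {κ : Cardinal.{v}} {S : Set C}
  (hS : ∀ X : C, IsKappaCompact κ X → ∃ A ∈ S, Nonempty (X ≅ A))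
  {X Y : C} {f : X ⟶ Y}
  (hf : ∀ A B : C, A ∈ S → B ∈ S → ∀ g : A ⟶ B, HasLiftingProperty g f)
include hS hf

lemma hasLiftingProperty_of_isKappaCompact {A B : C} (hA : IsKappaCompact κ A)
    (hB : IsKappaCompact κ B) (g : A ⟶ B) : HasLiftingProperty g f := by
  obtain ⟨A', hA', ⟨eA⟩⟩ := hS A hA
  obtain ⟨B', hB', ⟨eB⟩⟩ := hS B hB
  have := hf A' B' hA' hB' (eA.inv ≫ g ≫ eB.hom)
  exact .of_arrow_iso_left (i := eA.inv ≫ g ≫ eB.hom) (Arrow.isoMk eA.symm eB.symm) f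

lemma bijective_comp_of_isKappaCompact [Fact κ.IsRegular] [HasColimits C] {A : C}
    (hA : IsKappaCompact κ A) : Function.Bijective fun u : A ⟶ X ↦ u ≫ f := by
  have := hasLiftingProperty_of_isKappaCompact hS hf (isKappaCompact_initial κ) hA (initial.to A)
  have := hasLiftingProperty_of_isKappaCompact hS hf (hA.coprod hA) hA (codiag A)
  exact ⟨injective_comp_of_hasLiftingProperty_codiag f,
    surjective_comp_of_hasLiftingProperty_initial_to f⟩

end

theorem statement4_general (κ : Cardinal.{v}) (hκ : κ.IsRegular)
    (hpres : IsKappaPresentable κ C)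
    (S : Set C)
    (hS_repr : ∀ X : C, IsKappaCompact κ X → ∃ A ∈ S, Nonempty (X ≅ A)) :
    -- `J = {id_A : A ∈ S}` generates the trivial cofibrations: the fibrations of the
    -- trivial model structure (namely, all morphisms) are exactly the maps with the
    -- right lifting property against `J` ...
    (∀ {X Y : C} (f : X ⟶ Y),
      (∀ (A : C), A ∈ S → HasLiftingProperty (𝟙 A) f)) ∧
    -- ... and `I = {A ⟶ B : A, B ∈ S}` generates the cofibrations: the trivial
    -- fibrations of the trivial model structure (namely, the isomorphisms) are exactly
    -- the maps with the right lifting property against `I`.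
    (∀ {X Y : C} (f : X ⟶ Y),
      (∀ (A B : C), A ∈ S → B ∈ S → ∀ g : A ⟶ B, HasLiftingProperty g f) ↔ IsIso f) := by
  have : Fact κ.IsRegular := ⟨hκ⟩
  have : HasColimits C := hpres.1
  refine ⟨fun f A _ ↦ inferInstance,
    fun {X Y} f ↦ ⟨fun hf ↦ ?_, fun _ _ _ _ _ _ ↦ inferInstance⟩⟩
  obtain ⟨J, _, ⟨hX⟩⟩ := hpres.exists_colimitOfShape X
  obtain ⟨J', _, ⟨hY⟩⟩ := hpres.exists_colimitOfShape Y
  exact isIso_of_bijective_comp f (fun _ ↦ bijective_comp_of_isKappaCompact hS_repr hf) hX hY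

theorem statement4 (κ : Cardinal.{v}) (hκ : κ.IsRegular)
    (hpres : IsKappaPresentable κ C)
    (S : Set C)
    (hS_compact : ∀ A ∈ S, IsKappaCompact κ A)
    (hS_repr : ∀ X : C, IsKappaCompact κ X → ∃ A ∈ S, Nonempty (X ≅ A)) :
    -- `J = {id_A : A ∈ S}` generates the trivial cofibrations: the fibrations of the
    -- trivial model structure (namely, all morphisms) are exactly the maps with the
    -- right lifting property against `J` ...
    (∀ {X Y : C} (f : X ⟶ Y),
      (∀ (A : C), A ∈ S → HasLiftingProperty (𝟙 A) f)) ∧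
    -- ... and `I = {A ⟶ B : A, B ∈ S}` generates the cofibrations: the trivial
    -- fibrations of the trivial model structure (namely, the isomorphisms) are exactly
    -- the maps with the right lifting property against `I`.
    (∀ {X Y : C} (f : X ⟶ Y),
      (∀ (A B : C), A ∈ S → B ∈ S → ∀ g : A ⟶ B, HasLiftingProperty g f) ↔ IsIso f) :=
  statement4_general κ hκ hpres S hS_repr
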